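/- arXiv:1004.2372 — 8 statements merged into one kernel-verified Lean document; each statement's English description precedes it below -/
import Mathlib

section
/- Every non-empty finite language over a finite alphabet is the language of some deterministic (one-unambiguous) regular expression. -/
open Computability

/-- Regular expressions (with explicit parentheses) built from ∅, ε, letters,
concatenation, union, optional `?` and one-or-more `⁺`. -/
inductive PRE (α : Type) where
  | empty : PRE α
  | eps : PRE α
  | char : α → PRE α
  | paren : PRE α → PRE α
  | cat : PRE α → PRE α → PRE α
  | alt : PRE α → PRE α → PRE α
  | opt : PRE α → PRE α
  | pos : PRE α → PRE α

/-- The language of a regular expression. -/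
def PRE.lang {α : Type} : PRE α → Language α
  | .empty => 0
  | .eps => 1
  | .char a => {[a]}
  | .paren r => r.lang
  | .cat r s => r.lang * s.lang
  | .alt r s => r.lang + s.lang
  | .opt r => r.lang + 1
  | .pos r => r.lang * (r.lang)∗

/-- Replace the i-th occurrence of each letter `a` by the marked symbol `(a, i)`,
threading occurrence counters. -/
def PRE.markAux {α : Type} [DecidableEq α] : PRE α → (α → ℕ) → PRE (α × ℕ) × (α → ℕ)
  | .empty, c => (.empty, c)
  | .eps, c => (.eps, c)
  | .char a, c => (.char (a, c a + 1), fun b => if b = a then c a + 1 else c b)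
  | .paren r, c => let p := r.markAux c; (.paren p.1, p.2)
  | .cat r s, c => let p := r.markAux c; let q := s.markAux p.2; (.cat p.1 q.1, q.2)
  | .alt r s, c => let p := r.markAux c; let q := s.markAux p.2; (.alt p.1 q.1, q.2)
  | .opt r, c => let p := r.markAux c; (.opt p.1, p.2)
  | .pos r, c => let p := r.markAux c; (.pos p.1, p.2)

/-- The marked version r̄ of a regular expression. -/
def PRE.mark {α : Type} [DecidableEq α] (r : PRE α) : PRE (α × ℕ) :=
  (r.markAux fun _ => 0).1

/-- A regular expression is deterministic (one-unambiguous) if its marked version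
admits no two words w·a⁽ⁱ⁾·v and w·a⁽ʲ⁾·v′ with i ≠ j. -/
def PRE.Deterministic {α : Type} [DecidableEq α] (r : PRE α) : Prop :=
  ∀ (w v v' : List (α × ℕ)) (a : α) (i j : ℕ),
    w ++ (a, i) :: v ∈ r.mark.lang → w ++ (a, j) :: v' ∈ r.mark.lang → i = j

/-- Number of occurrences of the letter `a` in `r`. -/
def PRE.rep {α : Type} [DecidableEq α] : PRE α → α → ℕ
  | .empty, _ => 0
  | .eps, _ => 0
  | .char b, a => if b = a then 1 else 0
  | .paren r, a => r.rep a
  | .cat r s, a => r.rep a + s.rep a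
  | .alt r s, a => r.rep a + s.rep a
  | .opt r, a => r.rep a
  | .pos r, a => r.rep a

/-- `r` is a k-occurrence regular expression: every letter occurs at most `k` times. -/
def PRE.IsKORE {α : Type} [DecidableEq α] (k : ℕ) (r : PRE α) : Prop :=
  ∀ a, r.rep a ≤ k

/-- Length of the string representation (letters, ∅, ε, operators ·, +, ?, ⁺ and
parentheses each count as one character). -/
def PRE.len {α : Type} : PRE α → ℕ
  | .empty => 1
  | .eps => 1
  | .char _ => 1
  | .paren r => r.len + 2
  | .cat r s => r.len + s.len + 1
  | .alt r s => r.len + s.len + 1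
  | .opt r => r.len + 1
  | .pos r => r.len + 1

/-!
Build the prefix tree (trie) of the finite language `S`: a word is either empty or begins with
one of the finitely many first letters `a` of `S`, followed by a word of the residual language
`{u | a :: u ∈ S}`, which is handled recursively. The resulting expression
`[ε +] a₁ · r₁ + ⋯ + aₖ · rₖ` has distinct letters `aᵢ` at the head of every alternative, so
in the marked expression the first letter of each word names the branch taken, and determinism
propagates from the residual expressions. Since a subexpression is marked with counters already
advanced by the letters to its left, determinism is proved for the marking started from an
arbitrary counter.
-/

namespace Language

variable {α : Type}

def Deterministic (L : Language (α × ℕ)) : Prop :=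
  ∀ (w v v' : List (α × ℕ)) (a : α) (i j : ℕ),
    w ++ (a, i) :: v ∈ L → w ++ (a, j) :: v' ∈ L → i = j

def initials (L : Language (α × ℕ)) : Set α := {a | ∃ i u, (a, i) :: u ∈ L}

theorem mem_singleton_mul {β : Type} {x : β} {L : Language β} {u : List β} :
    u ∈ ({[x]} : Language β) * L ↔ ∃ t ∈ L, u = x :: t := by
  rw [mem_mul]
  constructor
  · rintro ⟨_, rfl, t, ht, rfl⟩
    exact ⟨t, ht, rfl⟩
  · rintro ⟨t, ht, rfl⟩
    exact ⟨[x], rfl, t, ht, rfl⟩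

theorem initials_zero : (0 : Language (α × ℕ)).initials = ∅ :=
  Set.eq_empty_of_forall_notMem fun _ ⟨_, _, h⟩ => notMem_zero _ h

theorem initials_add (L₁ L₂ : Language (α × ℕ)) :
    (L₁ + L₂).initials = L₁.initials ∪ L₂.initials := by
  ext a
  change (∃ i u, _ ∈ L₁ + L₂) ↔ (∃ i u, _ ∈ L₁) ∨ (∃ i u, _ ∈ L₂)
  simp only [mem_add, exists_or]

theorem initials_singleton_mul (a : α) (i : ℕ) (L : Language (α × ℕ)) :
    ({[(a, i)]} * L).initials ⊆ {a} := by
  rintro b ⟨_, _, h⟩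
  obtain ⟨_, _, h⟩ := mem_singleton_mul.mp h
  exact (Prod.mk.inj (List.cons.inj h).1).1

theorem deterministic_zero : (0 : Language (α × ℕ)).Deterministic :=
  fun _ _ _ _ _ _ h => absurd h (notMem_zero _)

theorem Deterministic.add_one {L : Language (α × ℕ)} (h : L.Deterministic) :
    (L + 1).Deterministic := by
  intro w v v' a i j h₁ h₂
  simp only [mem_add, mem_one, List.append_eq_nil_iff, reduceCtorEq, and_false, or_false]
    at h₁ h₂
  exact h w v v' a i j h₁ h₂

theorem Deterministic.add {L₁ L₂ : Language (α × ℕ)} (h₁ : L₁.Deterministic)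
    (h₂ : L₂.Deterministic) (hd : Disjoint L₁.initials L₂.initials) :
    (L₁ + L₂).Deterministic := by
  -- Two words with a common nonempty prefix, or both starting with `a`, share their initial.
  have cross : ∀ {L L' : Language (α × ℕ)}, Disjoint L.initials L'.initials →
      ∀ w v v' a i j, w ++ (a, i) :: v ∈ L → w ++ (a, j) :: v' ∈ L' → False := by
    intro L L' hd w v v' a i j h h'
    cases w with
    | nil => exact Set.disjoint_left.mp hd ⟨i, v, h⟩ ⟨j, v', h'⟩
    | cons x w => exact Set.disjoint_left.mp hd ⟨x.2, _, h⟩ ⟨x.2, _, h'⟩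
  intro w v v' a i j h h'
  rcases mem_add _ _ _ |>.mp h with h | h <;> rcases mem_add _ _ _ |>.mp h' with h' | h'
  · exact h₁ w v v' a i j h h'
  · exact (cross hd w v v' a i j h h').elim
  · exact (cross hd.symm w v v' a i j h h').elim
  · exact h₂ w v v' a i j h h'

theorem Deterministic.singleton_mul {L : Language (α × ℕ)} (h : L.Deterministic)
    (x : α × ℕ) : ({[x]} * L).Deterministic := by
  intro w v v' a i j h₁ h₂
  obtain ⟨t₁, ht₁, e₁⟩ := mem_singleton_mul.mp h₁
  obtain ⟨t₂, ht₂, e₂⟩ := mem_singleton_mul.mp h₂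
  cases w with
  | nil =>
    obtain ⟨rfl, -⟩ := List.cons.inj e₁
    exact (Prod.mk.inj (List.cons.inj e₂).1).2.symm
  | cons y w =>
    obtain ⟨-, rfl⟩ := List.cons.inj e₁
    obtain ⟨-, rfl⟩ := List.cons.inj e₂
    exact h w v v' a i j ht₁ ht₂

end Language

namespace PRE

section Branches

variable {α : Type}

def branches (f : α → PRE α) : List α → PRE α
  | [] => .empty
  | a :: l => .alt (.cat (.char a) (f a)) (branches f l)

theorem nil_notMem_lang_branches (f : α → PRE α) (l : List α) :
    [] ∉ (branches f l).lang := by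
  induction l with
  | nil => exact Language.notMem_zero _
  | cons a l ih =>
    simp only [branches, lang, Language.mem_add, Language.mem_singleton_mul, ih]
    simp

theorem cons_mem_lang_branches (f : α → PRE α) (l : List α) (a : α) (w : List α) :
    a :: w ∈ (branches f l).lang ↔ a ∈ l ∧ w ∈ (f a).lang := by
  induction l with
  | nil => simp [branches, lang, Language.notMem_zero]
  | cons b l ih =>
    simp only [branches, lang, Language.mem_add, Language.mem_singleton_mul, ih,
      List.cons.injEq, List.mem_cons]
    grind

variable [DecidableEq α]

theorem initials_markAux_branches (f : α → PRE α) (l : List α) (c : α → ℕ) :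
    ((branches f l).markAux c).1.lang.initials ⊆ {a | a ∈ l} := by
  induction l generalizing c with
  | nil => simp [branches, markAux, lang, Language.initials_zero]
  | cons a l ih =>
    change (_ * _ + _ : Language _).initials ⊆ _
    rw [Language.initials_add]
    refine Set.union_subset ((Language.initials_singleton_mul _ _ _).trans ?_) ((ih _).trans ?_)
    · simp
    · exact fun b hb => List.mem_cons_of_mem a hb

theorem deterministic_markAux_branches (f : α → PRE α) (l : List α)
    (hf : ∀ a ∈ l, ∀ c, ((f a).markAux c).1.lang.Deterministic) (hl : l.Nodup) (c : α → ℕ) :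
    ((branches f l).markAux c).1.lang.Deterministic := by
  induction l generalizing c with
  | nil => exact Language.deterministic_zero
  | cons a l ih =>
    obtain ⟨ha, hl⟩ := List.nodup_cons.mp hl
    refine Language.Deterministic.add ((hf a List.mem_cons_self _).singleton_mul _)
      (ih (fun b hb => hf b (List.mem_cons_of_mem a hb)) hl _) ?_
    refine Set.disjoint_of_subset_left (Language.initials_singleton_mul _ _ _) ?_
    refine Set.disjoint_singleton_left.mpr fun h => ha ?_
    exact initials_markAux_branches f l _ h

end Branches

end PRE

namespace Finset

variable {α : Type} [DecidableEq α]

def firstLetters (S : Finset (List α)) : Finset α :=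
  S.biUnion fun w => w.head?.toFinset

def residual (a : α) (S : Finset (List α)) : Finset (List α) :=
  (S.filter fun w => w.head? = some a).image List.tail

theorem mem_firstLetters_of_cons_mem {S : Finset (List α)} {a : α} {w : List α}
    (h : a :: w ∈ S) : a ∈ S.firstLetters :=
  mem_biUnion.mpr ⟨_, h, by simp⟩

theorem mem_residual {S : Finset (List α)} {a : α} {w : List α} :
    w ∈ S.residual a ↔ a :: w ∈ S := by
  simp only [residual, mem_image, mem_filter]
  constructor
  · rintro ⟨_ | ⟨b, u⟩, ⟨hu, hb⟩, rfl⟩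
    · simp at hb
    · obtain rfl : b = a := by simpa using hb
      exact hu
  · exact fun h => ⟨a :: w, ⟨h, rfl⟩, rfl⟩

end Finset

namespace PRE

variable {α : Type} [DecidableEq α]

noncomputable def trie : ℕ → Finset (List α) → PRE α
  | 0, _ => .empty
  | n + 1, S =>
    if [] ∈ S then .opt (branches (fun a => trie n (S.residual a)) S.firstLetters.toList)
    else branches (fun a => trie n (S.residual a)) S.firstLetters.toList

theorem mem_lang_trie {n : ℕ} {S : Finset (List α)} (hS : ∀ w ∈ S, w.length < n)
    (w : List α) : w ∈ (trie n S).lang ↔ w ∈ S := by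
  induction n generalizing S w with
  | zero => simpa [trie, lang, Language.notMem_zero] using fun h => hS w h
  | succ n ih =>
    have hbranches : ∀ w, w ∈ (branches (fun a => trie n (S.residual a))
        S.firstLetters.toList).lang ↔ w ≠ [] ∧ w ∈ S := by
      rintro (_ | ⟨a, u⟩)
      · simpa using nil_notMem_lang_branches _ _
      · have hres : ∀ v ∈ S.residual a, v.length < n := fun v hv => by
          simpa using hS _ (Finset.mem_residual.mp hv)
        rw [cons_mem_lang_branches, ih hres, Finset.mem_residual, Finset.mem_toList]
        exact ⟨fun h => ⟨List.cons_ne_nil _ _, h.2⟩,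
          fun h => ⟨Finset.mem_firstLetters_of_cons_mem h.2, h.2⟩⟩
    by_cases hnil : [] ∈ S
    · simp only [trie, hnil, if_true, lang, Language.mem_add, Language.mem_one, hbranches]
      rcases w with _ | ⟨a, u⟩ <;> simp [hnil]
    · simp only [trie, hnil, if_false, hbranches, and_iff_right_iff_imp]
      rintro h rfl
      exact hnil h

theorem deterministic_markAux_trie (n : ℕ) (S : Finset (List α)) (c : α → ℕ) :
    ((trie n S).markAux c).1.lang.Deterministic := by
  induction n generalizing S c with
  | zero => exact Language.deterministic_zero
  | succ n ih =>
    have h := deterministic_markAux_branches _ _ (fun a _ => ih (S.residual a))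
      (Finset.nodup_toList S.firstLetters)
    by_cases hnil : [] ∈ S
    · simp only [trie, hnil, if_true]
      exact (h c).add_one
    · simp only [trie, hnil, if_false]
      exact h c

end PRE

theorem stmt0_general {α : Type} [DecidableEq α]
    (S : Finset (List α)) :
    ∃ r : PRE α, r.Deterministic ∧ ∀ w : List α, w ∈ r.lang ↔ w ∈ S :=
  ⟨PRE.trie (S.sup List.length + 1) S, PRE.deterministic_markAux_trie _ _ _,
    PRE.mem_lang_trie fun _ hw => Nat.lt_succ_of_le (Finset.le_sup hw)⟩

/-- Every non-empty finite language over a finite alphabet is the language of some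
deterministic regular expression. -/
theorem stmt0 {α : Type} [Fintype α] [DecidableEq α]
    (S : Finset (List α)) (hS : S.Nonempty) :
    ∃ r : PRE α, r.Deterministic ∧ ∀ w : List α, w ∈ r.lang ↔ w ∈ S :=
  stmt0_general S
end

section
/- The class of deterministic regular expressions is not learnable in the limit from positive data. -/
open Computability
set_option linter.unusedSectionVars false

/-- `M` learns the class `R` in the limit from positive data: it is sound
(`S ⊆ L(M S)` for every sample `S`) and complete (every `r ∈ R` has a
characteristic sample `S_r ⊆ L(r)` such that `M S` is equivalent to `r`
whenever `S_r ⊆ S ⊆ L(r)`). -/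
def Learns {α : Type} (M : Finset (List α) → PRE α) (R : Set (PRE α)) : Prop :=
  (∀ S : Finset (List α), ∀ w ∈ S, w ∈ (M S).lang) ∧
  ∀ r ∈ R, ∃ Sr : Finset (List α), (∀ w ∈ Sr, w ∈ r.lang) ∧
    ∀ S : Finset (List α), Sr ⊆ S → (∀ w ∈ S, w ∈ r.lang) → (M S).lang = r.lang

section Aux
variable {β : Type}

lemma join_rep {b : β} : ∀ {L : List (List β)}, (∀ y ∈ L, y = [b]) →
    L.flatten = List.replicate L.length b
  | [], _ => rfl
  | y :: L, h => by
    have hy : y = [b] := h y (by simp)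
    have := join_rep (L := L) (fun z hz => h z (by simp [hz]))
    simp [hy, this, List.replicate_succ]

lemma mem_star_lang {b : β} {w : List β} :
    w ∈ (({[b]} : Language β) * ({[b]} : Language β)∗ + 1) ↔ ∃ n, w = List.replicate n b := by
  constructor
  · intro h
    rcases (Language.mem_add _ _ _).1 h with h | h
    · rcases Language.mem_mul.1 h with ⟨u, hu, v, hv, huv⟩
      rcases Language.mem_kstar.1 hv with ⟨L, hL, hLmem⟩
      have hu' : u = [b] := hu
      have hv' : v = List.replicate L.length b := hL ▸ join_rep hLmem
      exact ⟨L.length + 1, by simp [← huv, hu', hv', List.replicate_succ]⟩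
    · exact ⟨0, (Language.mem_one _).1 h⟩
  · rintro ⟨n, rfl⟩
    cases n with
    | zero => exact (Language.mem_add _ _ _).2 (Or.inr rfl)
    | succ m =>
      refine (Language.mem_add _ _ _).2 (Or.inl (Language.mem_mul.2 ⟨[b], rfl, List.replicate m b, ?_, by simp [List.replicate_succ]⟩))
      refine Language.mem_kstar.2 ⟨List.replicate m [b], ?_, ?_⟩
      · rw [join_rep (fun y hy => List.eq_of_mem_replicate hy)]; simp
      · exact fun y hy => List.eq_of_mem_replicate hy

end Aux

section Main
variable {α : Type} [DecidableEq α]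

/-- The expression `(a⁺)?`, with language `a*`. -/
def rStar (a : α) : PRE α := .opt (.pos (.char a))

lemma rStar_lang (a : α) {w : List α} :
    w ∈ (rStar a).lang ↔ ∃ n, w = List.replicate n a := mem_star_lang

lemma rStar_mark (a : α) : (rStar a).mark = .opt (.pos (.char (a, 1))) := rfl

lemma rStar_det (a : α) : (rStar a).Deterministic := by
  intro w v v' b i j h1 h2
  rw [rStar_mark] at h1 h2
  have e1 : (b, i) = (a, 1) := by
    rcases (mem_star_lang (b := (a,1))).1 h1 with ⟨n, hn⟩
    exact List.eq_of_mem_replicate (hn ▸ (by simp : (b, i) ∈ w ++ (b, i) :: v))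
  have e2 : (b, j) = (a, 1) := by
    rcases (mem_star_lang (b := (a,1))).1 h2 with ⟨n, hn⟩
    exact List.eq_of_mem_replicate (hn ▸ (by simp : (b, j) ∈ w ++ (b, j) :: v'))
  simp only [Prod.mk.injEq] at e1 e2
  omega

/-- The chain `(a(a(...)?)?)?` with language `{a^j : j ≤ n}`. -/
def rChain (a : α) : ℕ → PRE α
  | 0 => .eps
  | n + 1 => .opt (.cat (.char a) (rChain a n))

/-- Marked chain starting at occurrence index `k + 1`. -/
def mChain (a : α) : ℕ → ℕ → PRE (α × ℕ)
  | 0, _ => .eps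
  | n + 1, k => .opt (.cat (.char (a, k + 1)) (mChain a n (k + 1)))

lemma rChain_markAux (a : α) : ∀ n (c : α → ℕ),
    ((rChain a n).markAux c).1 = mChain a n (c a)
  | 0, c => rfl
  | n + 1, c => by
    simp only [rChain, mChain, PRE.markAux]
    rw [rChain_markAux a n]
    simp

lemma rChain_mark (a : α) (n : ℕ) : (rChain a n).mark = mChain a n 0 :=
  rChain_markAux a n _

def chainWord (a : α) (k j : ℕ) : List (α × ℕ) :=
  (List.range j).map (fun i => (a, k + 1 + i))

lemma mChain_lang (a : α) : ∀ (n k : ℕ) {w : List (α × ℕ)},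
    w ∈ (mChain a n k).lang ↔ ∃ j ≤ n, w = chainWord a k j
  | 0, k, w => by
    constructor
    · intro h
      exact ⟨0, le_refl 0, (Language.mem_one _).1 h⟩
    · rintro ⟨j, hj, rfl⟩
      interval_cases j
      exact (Language.mem_one _).2 rfl
  | n + 1, k, w => by
    simp only [mChain, PRE.lang, Language.mem_add, Language.mem_mul, Language.mem_one]
    constructor
    · rintro (⟨u, hu, v, hv, rfl⟩ | rfl)
      · rcases (mChain_lang a n (k + 1)).1 hv with ⟨j, hj, rfl⟩
        refine ⟨j + 1, by omega, ?_⟩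
        have hu' : u = [(a, k + 1)] := hu
        subst hu'
        simp [chainWord, List.range_succ_eq_map, Function.comp]
        intro i _; omega
      · exact ⟨0, by omega, rfl⟩
    · rintro ⟨j, hj, rfl⟩
      cases j with
      | zero => exact Or.inr rfl
      | succ m =>
        refine Or.inl ⟨[(a, k + 1)], rfl, chainWord a (k + 1) m, (mChain_lang a n (k+1)).2 ⟨m, by omega, rfl⟩, ?_⟩
        simp [chainWord, List.range_succ_eq_map, Function.comp]
        intro i _; omega

lemma chain_index {a : α} {n : ℕ} {w v : List (α × ℕ)} {b : α} {i : ℕ}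
    (h : w ++ (b, i) :: v ∈ (mChain a n 0).lang) : i = w.length + 1 := by
  rcases (mChain_lang a n 0).1 h with ⟨j, hj, hw⟩
  have hlen : w.length < j := by
    have := congrArg List.length hw
    simp [chainWord] at this
    omega
  have := congrArg (fun l => l[w.length]?) hw
  simp [chainWord, List.getElem?_append_right (le_refl w.length), hlen] at this
  omega

lemma rChain_det (a : α) (n : ℕ) : (rChain a n).Deterministic := by
  intro w v v' b i j h1 h2
  rw [rChain_mark] at h1 h2
  rw [chain_index h1, chain_index h2]

lemma rChain_lang (a : α) : ∀ (n : ℕ) {w : List α},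
    w ∈ (rChain a n).lang ↔ ∃ j ≤ n, w = List.replicate j a
  | 0, w => by
    constructor
    · intro h
      exact ⟨0, le_refl 0, (Language.mem_one _).1 h⟩
    · rintro ⟨j, hj, rfl⟩
      interval_cases j
      exact (Language.mem_one _).2 rfl
  | n + 1, w => by
    simp only [rChain, PRE.lang, Language.mem_add, Language.mem_mul, Language.mem_one]
    constructor
    · rintro (⟨u, hu, v, hv, rfl⟩ | rfl)
      · rcases (rChain_lang a n).1 hv with ⟨j, hj, rfl⟩
        have hu' : u = [a] := hu
        exact ⟨j + 1, by omega, by simp [hu', List.replicate_succ]⟩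
      · exact ⟨0, by omega, rfl⟩
    · rintro ⟨j, hj, rfl⟩
      cases j with
      | zero => exact Or.inr rfl
      | succ m =>
        exact Or.inl ⟨[a], rfl, List.replicate m a, (rChain_lang a n).2 ⟨m, by omega, rfl⟩, by simp [List.replicate_succ]⟩

end Main

/-- The class of deterministic regular expressions is not learnable in the limit
from positive data. -/
theorem stmt1 {α : Type} [Fintype α] [DecidableEq α] [Nonempty α] :
    ¬ ∃ M : Finset (List α) → PRE α, Learns M {r : PRE α | r.Deterministic} := by
  rintro ⟨M, hsound, hcomp⟩
  obtain ⟨a⟩ := ‹Nonempty α›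
  obtain ⟨Si, hSi, hchar⟩ := hcomp (rStar a) (rStar_det a)
  set N : ℕ := Si.sup List.length with hN
  obtain ⟨Sf, hSf, hcharF⟩ := hcomp (rChain a N) (rChain_det a N)
  set S : Finset (List α) := Si ∪ Sf with hS
  have hSsubChain : ∀ w ∈ S, w ∈ (rChain a N).lang := by
    intro w hw
    rcases Finset.mem_union.1 hw with hw | hw
    · rcases (rStar_lang a).1 (hSi w hw) with ⟨n, rfl⟩
      refine (rChain_lang a N).2 ⟨n, ?_, rfl⟩
      have := Finset.le_sup (f := List.length) hw
      simpa using this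
    · exact hSf w hw
  have hSsubStar : ∀ w ∈ S, w ∈ (rStar a).lang := by
    intro w hw
    rcases (rChain_lang a N).1 (hSsubChain w hw) with ⟨j, _, rfl⟩
    exact (rStar_lang a).2 ⟨j, rfl⟩
  have h1 : (M S).lang = (rStar a).lang :=
    hchar S (Finset.subset_union_left) hSsubStar
  have h2 : (M S).lang = (rChain a N).lang :=
    hcharF S (Finset.subset_union_right) hSsubChain
  have hmem : List.replicate (N + 1) a ∈ (rChain a N).lang := by
    rw [← h2, h1]
    exact (rStar_lang a).2 ⟨N + 1, rfl⟩
  rcases (rChain_lang a N).1 hmem with ⟨j, hj, heq⟩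
  have := congrArg List.length heq
  simp at this
  omega
end

section
/- Any class of languages over a finite alphabet Σ (with |Σ| ≥ 1) that contains all non-empty finite languages and at least one infinite language is not learnable in the limit from positive data. -/
open Computability

/-- `M` learns the class `C` of languages in the limit from positive data: it is
sound (`S ⊆ M S` for every sample `S`) and complete (every `L ∈ C` has a finite
characteristic sample `S_L ⊆ L` such that `M S` describes exactly `L` whenever
`S_L ⊆ S ⊆ L`). -/
def LearnsLang {α : Type} (M : Finset (List α) → Language α) (C : Set (Language α)) : Prop :=
  (∀ S : Finset (List α), ∀ w ∈ S, w ∈ M S) ∧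
  ∀ L ∈ C, ∃ SL : Finset (List α), (∀ w ∈ SL, w ∈ L) ∧
    ∀ S : Finset (List α), SL ⊆ S → (∀ w ∈ S, w ∈ L) → M S = L

/-- Gold's theorem: any class of languages over a finite alphabet Σ with |Σ| ≥ 1 that
contains all non-empty finite languages and at least one infinite language is not
learnable in the limit from positive data. -/
theorem stmt2 {α : Type} [Fintype α] [DecidableEq α] [Nonempty α]
    (C : Set (Language α))
    (hfin : ∀ L : Language α, {w : List α | w ∈ L}.Finite → (∃ w, w ∈ L) → L ∈ C)
    (hinf : ∃ L ∈ C, {w : List α | w ∈ L}.Infinite) :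
    ¬ ∃ M : Finset (List α) → Language α, LearnsLang M C := by
  rintro ⟨M, hsound, hcomp⟩
  obtain ⟨Linf, hLinfC, hLinfinf⟩ := hinf
  obtain ⟨SL, hSLsub, hSL⟩ := hcomp Linf hLinfC
  -- pick a word in Linf (exists since Linf is infinite)
  obtain ⟨w0, hw0⟩ := hLinfinf.nonempty
  set S : Finset (List α) := insert w0 SL with hS
  have hSsub : ∀ w ∈ S, w ∈ Linf := by
    intro w hw
    rcases Finset.mem_insert.1 hw with h | h
    · exact h ▸ hw0
    · exact hSLsub w h
  have h1 : M S = Linf := hSL S (Finset.subset_insert _ _) hSsub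
  -- the finite language given by S
  set Lf : Language α := {w | w ∈ S} with hLf
  have hLfC : Lf ∈ C := hfin Lf (S.finite_toSet) ⟨w0, Finset.mem_insert_self _ _⟩
  obtain ⟨Sf, hSfsub, hSf⟩ := hcomp Lf hLfC
  have hSfS : Sf ⊆ S := fun w hw => hSfsub w hw
  have h2 : M S = Lf := hSf S hSfS (fun w hw => hw)
  have : Linf = Lf := h1 ▸ h2
  have : {w : List α | w ∈ Linf}.Finite := by
    rw [this]
    exact S.finite_toSet
  exact hLinfinf this
end

section
/- Every expression t generated by the grammar t ::= a | a? | a⁺ | a⁺? | (a) | (a)? | (a)⁺ | (a)⁺? | t₁·t₂ | (t₁·t₂) | (t₁·t₂)? | (t₁·t₂)⁺ | (t₁·t₂)⁺? | t₁+t₂ | (t₁+t₂) | (t₁+t₂)? | (t₁+t₂)⁺ | (t₁+t₂)⁺? satisfies |t| ≤ −4 + 10·Σ_{a∈Σ(t)} rep(t,a), where |t| is the length of t as a string (including operators and parentheses), Σ(t) is the set of letters appearing in t, and rep(t,a) is the number of occurrences of letter a in t. -/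
/-- Expressions generated by the grammar
t ::= a | a? | a⁺ | a⁺? | (a) | (a)? | (a)⁺ | (a)⁺?
    | t₁·t₂ | (t₁·t₂) | (t₁·t₂)? | (t₁·t₂)⁺ | (t₁·t₂)⁺?
    | t₁+t₂ | (t₁+t₂) | (t₁+t₂)? | (t₁+t₂)⁺ | (t₁+t₂)⁺? -/
inductive GT (α : Type) where
  | lit : α → GT α                 -- a
  | litOpt : α → GT α              -- a?
  | litPos : α → GT α              -- a⁺
  | litPosOpt : α → GT α           -- a⁺?
  | plit : α → GT α                -- (a)
  | plitOpt : α → GT α             -- (a)?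
  | plitPos : α → GT α             -- (a)⁺
  | plitPosOpt : α → GT α          -- (a)⁺?
  | cat : GT α → GT α → GT α       -- t₁·t₂
  | pcat : GT α → GT α → GT α      -- (t₁·t₂)
  | pcatOpt : GT α → GT α → GT α   -- (t₁·t₂)?
  | pcatPos : GT α → GT α → GT α   -- (t₁·t₂)⁺
  | pcatPosOpt : GT α → GT α → GT α -- (t₁·t₂)⁺?
  | alt : GT α → GT α → GT α       -- t₁+t₂
  | palt : GT α → GT α → GT α      -- (t₁+t₂)
  | paltOpt : GT α → GT α → GT α   -- (t₁+t₂)?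
  | paltPos : GT α → GT α → GT α   -- (t₁+t₂)⁺
  | paltPosOpt : GT α → GT α → GT α -- (t₁+t₂)⁺?

/-- Length of the string representation: each letter, operator (·, +, ?, ⁺) and
parenthesis counts as one character. -/
def GT.len {α : Type} : GT α → ℕ
  | .lit _ => 1
  | .litOpt _ => 2
  | .litPos _ => 2
  | .litPosOpt _ => 3
  | .plit _ => 3
  | .plitOpt _ => 4
  | .plitPos _ => 4
  | .plitPosOpt _ => 5
  | .cat t u => t.len + u.len + 1
  | .pcat t u => t.len + u.len + 3
  | .pcatOpt t u => t.len + u.len + 4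
  | .pcatPos t u => t.len + u.len + 4
  | .pcatPosOpt t u => t.len + u.len + 5
  | .alt t u => t.len + u.len + 1
  | .palt t u => t.len + u.len + 3
  | .paltOpt t u => t.len + u.len + 4
  | .paltPos t u => t.len + u.len + 4
  | .paltPosOpt t u => t.len + u.len + 5

/-- rep(t,a): number of occurrences of the letter `a` in `t`. -/
def GT.rep {α : Type} [DecidableEq α] : GT α → α → ℕ
  | .lit b, a | .litOpt b, a | .litPos b, a | .litPosOpt b, a
  | .plit b, a | .plitOpt b, a | .plitPos b, a | .plitPosOpt b, a =>
      if b = a then 1 else 0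
  | .cat t u, a | .pcat t u, a | .pcatOpt t u, a | .pcatPos t u, a | .pcatPosOpt t u, a
  | .alt t u, a | .palt t u, a | .paltOpt t u, a | .paltPos t u, a | .paltPosOpt t u, a =>
      t.rep a + u.rep a

/-- Σ(t): the set of letters appearing in `t`. -/
def GT.letters {α : Type} [DecidableEq α] : GT α → Finset α
  | .lit b | .litOpt b | .litPos b | .litPosOpt b
  | .plit b | .plitOpt b | .plitPos b | .plitPosOpt b => {b}
  | .cat t u | .pcat t u | .pcatOpt t u | .pcatPos t u | .pcatPosOpt t u
  | .alt t u | .palt t u | .paltOpt t u | .paltPos t u | .paltPosOpt t u =>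
      t.letters ∪ u.letters

/-- Number of letter occurrences in `t`. -/
def GT.size {α : Type} : GT α → ℕ
  | .lit _ | .litOpt _ | .litPos _ | .litPosOpt _
  | .plit _ | .plitOpt _ | .plitPos _ | .plitPosOpt _ => 1
  | .cat t u | .pcat t u | .pcatOpt t u | .pcatPos t u | .pcatPosOpt t u
  | .alt t u | .palt t u | .paltOpt t u | .paltPos t u | .paltPosOpt t u =>
      t.size + u.size

lemma GT.rep_eq_zero {α : Type} [DecidableEq α] (t : GT α) (a : α)
    (h : a ∉ t.letters) : t.rep a = 0 := by
  induction t <;> simp_all [GT.letters, GT.rep, eq_comm]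

lemma GT.sum_rep_superset {α : Type} [DecidableEq α] (t : GT α) (s : Finset α)
    (hs : t.letters ⊆ s) : ∑ a ∈ s, t.rep a = ∑ a ∈ t.letters, t.rep a := by
  rw [← Finset.sum_subset hs]
  intro x _ hx
  exact t.rep_eq_zero x hx

lemma GT.sum_rep {α : Type} [DecidableEq α] (t : GT α) :
    ∑ a ∈ t.letters, t.rep a = t.size := by
  induction t with
  | cat t u ht hu | pcat t u ht hu | pcatOpt t u ht hu | pcatPos t u ht hu
  | pcatPosOpt t u ht hu | alt t u ht hu | palt t u ht hu | paltOpt t u ht hu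
  | paltPos t u ht hu | paltPosOpt t u ht hu =>
      show ∑ a ∈ t.letters ∪ u.letters, (t.rep a + u.rep a) = t.size + u.size
      rw [Finset.sum_add_distrib,
        t.sum_rep_superset _ Finset.subset_union_left,
        u.sum_rep_superset _ Finset.subset_union_right, ht, hu]
  | _ => simp [GT.letters, GT.rep, GT.size]

lemma GT.len_le {α : Type} (t : GT α) : t.len + 5 ≤ 10 * t.size := by
  induction t <;> simp_all [GT.len, GT.size] <;> omega

/-- Every expression generated by the grammar satisfies
|t| ≤ −4 + 10·Σ_{a∈Σ(t)} rep(t,a). -/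
theorem stmt4 {α : Type} [DecidableEq α] (t : GT α) :
    (t.len : ℤ) ≤ -4 + 10 * ∑ a ∈ t.letters, (t.rep a : ℤ) := by
  have h1 : (∑ a ∈ t.letters, (t.rep a : ℤ)) = (t.size : ℤ) := by
    rw [← Nat.cast_sum, t.sum_rep]
  have h2 := t.len_le
  rw [h1]
  omega
end

section
/- For every k and every finite alphabet A, the class of languages definable by deterministic k-occurrence regular expressions over A is finite up to language equivalence; consequently, for each fixed k, the class of deterministic k-OREs is learnable in the limit from positive data. -/
open Computability

/-!
The letter-free expressions denote `0` or `1`, and in a Kleene algebra the unary operators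
`a ↦ a + 1`, `a ↦ a * a∗` and `a ↦ a∗` map the set `{a, a + 1, a * a∗, a∗}` into itself. Hence,
by induction on the number of letter occurrences, the languages of expressions with at most `n`
letter occurrences over a finite alphabet lie in a finite set; a k-ORE has at most `k·|A|` of
them. A class of expressions with finitely many languages is learnable in the limit by returning
an expression of a minimal language consistent with the sample: as characteristic sample of `r`
take one word of `L(r) \ L` for each of the finitely many languages `L ⊉ L(r)` of the class.
-/

open Language

section KleeneAlgebra

variable {K : Type*} [KleeneAlgebra K]

theorem kstar_add_one (a : K) : (a + 1)∗ = a∗ := by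
  refine le_antisymm ?_ (kstar_mono (le_add_of_le_left le_rfl))
  calc (a + 1)∗ ≤ a∗∗ := kstar_mono (add_le le_kstar one_le_kstar)
    _ = a∗ := kstar_idem a

theorem kstar_mul_kstar_self (a : K) : (a * a∗)∗ = a∗ := by
  refine le_antisymm ?_ (kstar_mono (le_mul_of_one_le_right' one_le_kstar))
  calc (a * a∗)∗ ≤ a∗∗ := kstar_mono mul_kstar_le_kstar
    _ = a∗ := kstar_idem a

def unaryClosure (S : Set K) : Set K :=
  S ∪ (· + 1) '' S ∪ (fun a => a * a∗) '' S ∪ (·∗) '' S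

theorem subset_unaryClosure (S : Set K) : S ⊆ unaryClosure S :=
  fun _ h => Or.inl (Or.inl (Or.inl h))

theorem Set.Finite.unaryClosure {S : Set K} (h : S.Finite) : (unaryClosure S).Finite :=
  ((h.union (h.image _)).union (h.image _)).union (h.image _)

theorem add_one_mem_unaryClosure {S : Set K} {a : K} (h : a ∈ unaryClosure S) :
    a + 1 ∈ unaryClosure S := by
  rcases h with ((h | ⟨b, hb, rfl⟩) | ⟨b, hb, rfl⟩) | ⟨b, hb, rfl⟩
  · exact Or.inl (Or.inl (Or.inr ⟨a, h, rfl⟩))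
  · rw [add_assoc, add_idem]
    exact Or.inl (Or.inl (Or.inr ⟨b, hb, rfl⟩))
  · rw [add_comm, one_add_mul_kstar]
    exact Or.inr ⟨b, hb, rfl⟩
  · rw [add_eq_left_iff_le.2 one_le_kstar]
    exact Or.inr ⟨b, hb, rfl⟩

theorem mul_kstar_mem_unaryClosure {S : Set K} {a : K} (h : a ∈ unaryClosure S) :
    a * a∗ ∈ unaryClosure S := by
  rcases h with ((h | ⟨b, hb, rfl⟩) | ⟨b, hb, rfl⟩) | ⟨b, hb, rfl⟩
  · exact Or.inl (Or.inr ⟨a, h, rfl⟩)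
  · rw [kstar_add_one, add_mul, one_mul, add_eq_right_iff_le.2 mul_kstar_le_kstar]
    exact Or.inr ⟨b, hb, rfl⟩
  · rw [kstar_mul_kstar_self, mul_assoc, kstar_mul_kstar]
    exact Or.inl (Or.inr ⟨b, hb, rfl⟩)
  · rw [kstar_idem, kstar_mul_kstar]
    exact Or.inr ⟨b, hb, rfl⟩

/-- A finite set containing every element denoted by a regular expression over the atoms `A`
with at most `n` occurrences of atoms. -/
def occLevel (A : Set K) : ℕ → Set K
  | 0 => {0, 1}
  | n + 1 => unaryClosure (occLevel A n ∪ A ∪ Set.image2 (· * ·) (occLevel A n) (occLevel A n)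
      ∪ Set.image2 (· + ·) (occLevel A n) (occLevel A n))

variable {A : Set K}

theorem Set.Finite.occLevel (hA : A.Finite) : ∀ n, (occLevel A n).Finite
  | 0 => (Set.finite_singleton 1).insert 0
  | n + 1 => by
    have h := hA.occLevel n
    exact (((h.union hA).union (h.image2 _ h)).union (h.image2 _ h)).unaryClosure

theorem occLevel_succ_subset (n : ℕ) : occLevel A n ⊆ occLevel A (n + 1) :=
  (Set.subset_union_left.trans Set.subset_union_left).trans
    (Set.subset_union_left.trans (subset_unaryClosure _))

theorem occLevel_mono : Monotone (occLevel A) :=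
  monotone_nat_of_le_succ occLevel_succ_subset

theorem zero_mem_occLevel (n : ℕ) : (0 : K) ∈ occLevel A n :=
  occLevel_mono (Nat.zero_le n) (Or.inl rfl)

theorem one_mem_occLevel (n : ℕ) : (1 : K) ∈ occLevel A n :=
  occLevel_mono (Nat.zero_le n) (Or.inr rfl)

theorem mem_occLevel_one {a : K} (ha : a ∈ A) : a ∈ occLevel A 1 :=
  subset_unaryClosure _ (Or.inl (Or.inl (Or.inr ha)))

theorem add_one_mem_occLevel {n : ℕ} {a : K} (h : a ∈ occLevel A n) :
    a + 1 ∈ occLevel A n := by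
  cases n with
  | zero => rcases h with rfl | rfl <;> simp [occLevel]
  | succ n => exact add_one_mem_unaryClosure h

theorem mul_kstar_mem_occLevel {n : ℕ} {a : K} (h : a ∈ occLevel A n) :
    a * a∗ ∈ occLevel A n := by
  cases n with
  | zero => rcases h with rfl | rfl <;> simp [occLevel]
  | succ n => exact mul_kstar_mem_unaryClosure h

theorem mul_mem_occLevel {m n : ℕ} {a b : K} (ha : a ∈ occLevel A m) (hb : b ∈ occLevel A n) :
    a * b ∈ occLevel A (m + n) := by
  rcases m with _ | m
  · obtain rfl | rfl : a = 0 ∨ a = 1 := ha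
    · simpa using zero_mem_occLevel n
    · simpa using hb
  rcases n with _ | n
  · obtain rfl | rfl : b = 0 ∨ b = 1 := hb
    · simpa using zero_mem_occLevel (m + 1)
    · simpa using ha
  rw [show m + 1 + (n + 1) = m + n + 1 + 1 by omega]
  exact subset_unaryClosure _ (Or.inl (Or.inr (Set.mem_image2_of_mem
    (occLevel_mono (by omega) ha) (occLevel_mono (by omega) hb))))

theorem add_mem_occLevel {m n : ℕ} {a b : K} (ha : a ∈ occLevel A m) (hb : b ∈ occLevel A n) :
    a + b ∈ occLevel A (m + n) := by
  rcases m with _ | m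
  · obtain rfl | rfl : a = 0 ∨ a = 1 := ha
    · simpa using hb
    · rw [zero_add, add_comm]
      exact add_one_mem_occLevel hb
  rcases n with _ | n
  · obtain rfl | rfl : b = 0 ∨ b = 1 := hb
    · simpa using ha
    · exact add_one_mem_occLevel ha
  rw [show m + 1 + (n + 1) = m + n + 1 + 1 by omega]
  exact subset_unaryClosure _ (Or.inr (Set.mem_image2_of_mem
    (occLevel_mono (by omega) ha) (occLevel_mono (by omega) hb)))

end KleeneAlgebra

namespace PRE

variable {α : Type}

def numLetters : PRE α → ℕ
  | .empty => 0
  | .eps => 0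
  | .char _ => 1
  | .paren r => r.numLetters
  | .cat r s => r.numLetters + s.numLetters
  | .alt r s => r.numLetters + s.numLetters
  | .opt r => r.numLetters
  | .pos r => r.numLetters

theorem lang_mem_occLevel :
    ∀ r : PRE α, r.lang ∈ occLevel (Set.range fun a : α => {[a]}) r.numLetters
  | .empty => zero_mem_occLevel 0
  | .eps => one_mem_occLevel 0
  | .char a => mem_occLevel_one ⟨a, rfl⟩
  | .paren r => r.lang_mem_occLevel
  | .cat r s => mul_mem_occLevel r.lang_mem_occLevel s.lang_mem_occLevel
  | .alt r s => add_mem_occLevel r.lang_mem_occLevel s.lang_mem_occLevel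
  | .opt r => add_one_mem_occLevel r.lang_mem_occLevel
  | .pos r => mul_kstar_mem_occLevel r.lang_mem_occLevel

theorem numLetters_eq_sum_rep [Fintype α] [DecidableEq α] :
    ∀ r : PRE α, r.numLetters = ∑ a, r.rep a
  | .empty | .eps => by simp [numLetters, rep]
  | .char b => by simp [numLetters, rep]
  | .paren r | .opt r | .pos r => by simpa [numLetters, rep] using numLetters_eq_sum_rep r
  | .cat r s | .alt r s => by
    simp only [numLetters, rep, Finset.sum_add_distrib, numLetters_eq_sum_rep r,
      numLetters_eq_sum_rep s]

theorem IsKORE.numLetters_le [Fintype α] [DecidableEq α] {k : ℕ} {r : PRE α}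
    (h : r.IsKORE k) : r.numLetters ≤ Fintype.card α * k := by
  rw [numLetters_eq_sum_rep]
  simpa using Finset.sum_le_sum fun a (_ : a ∈ Finset.univ) => h a

theorem finite_lang_image_setOf_isKORE [Fintype α] [DecidableEq α] (k : ℕ) :
    (lang '' {r : PRE α | r.IsKORE k}).Finite := by
  have hletters := Set.finite_range fun a : α => ({[a]} : Language α)
  refine (hletters.occLevel (Fintype.card α * k)).subset ?_
  rintro _ ⟨r, hr, rfl⟩
  exact occLevel_mono hr.numLetters_le r.lang_mem_occLevel

def ofWord : List α → PRE α
  | [] => .eps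
  | a :: w => .cat (.char a) (ofWord w)

theorem mem_lang_ofWord : ∀ w : List α, w ∈ (ofWord w).lang
  | [] => nil_mem_one
  | a :: w => mem_mul.2 ⟨[a], rfl, w, mem_lang_ofWord w, rfl⟩

noncomputable def ofWords (S : Finset (List α)) : PRE α :=
  S.toList.foldr (fun w e => .alt (ofWord w) e) .empty

theorem mem_lang_ofWords {S : Finset (List α)} {w : List α} (hw : w ∈ S) :
    w ∈ (ofWords S).lang := by
  suffices h : ∀ l : List (List α), w ∈ l →
      w ∈ (l.foldr (fun w e => PRE.alt (ofWord w) e) PRE.empty).lang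
    from h _ (Finset.mem_toList.2 hw)
  intro l hl
  induction l with
  | nil => simp at hl
  | cons x l ih =>
    rcases List.mem_cons.1 hl with rfl | hl
    · exact (mem_add _ _ _).2 (Or.inl (mem_lang_ofWord w))
    · exact (mem_add _ _ _).2 (Or.inr (ih hl))

end PRE

section Learning

variable {α : Type}

theorem exists_finset_separating {𝓛 : Set (Language α)} (h𝓛 : 𝓛.Finite) (L : Language α) :
    ∃ T : Finset (List α), (∀ w ∈ T, w ∈ L) ∧ ∀ L' ∈ 𝓛, (∀ w ∈ T, w ∈ L') → L ≤ L' := by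
  have hsep : ∀ L' ∈ {L' ∈ 𝓛 | ¬ L ≤ L'}, ∃ w, w ∈ L ∧ w ∉ L' :=
    fun L' hL' => Set.not_subset.1 hL'.2
  classical
  choose! sep hsep using hsep
  refine ⟨(h𝓛.subset (Set.sep_subset 𝓛 (¬ L ≤ ·))).toFinset.image sep, ?_, fun L' hL' hT => ?_⟩
  · simp only [Finset.mem_image, Set.Finite.mem_toFinset]
    rintro _ ⟨L', hL', rfl⟩
    exact (hsep L' hL').1
  · by_contra hle
    exact (hsep L' ⟨hL', hle⟩).2 (hT _ (Finset.mem_image_of_mem _ (by simpa using ⟨hL', hle⟩)))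

def consistentLangs (R : Set (PRE α)) (S : Finset (List α)) : Set (Language α) :=
  {L ∈ PRE.lang '' R | ∀ w ∈ S, w ∈ L}

open Classical in
noncomputable def minimalLearner (R : Set (PRE α)) (S : Finset (List α)) : PRE α :=
  if h : ∃ r ∈ R, Minimal (· ∈ consistentLangs R S) r.lang then h.choose else PRE.ofWords S

theorem learns_minimalLearner {R : Set (PRE α)} (hR : (PRE.lang '' R).Finite) :
    Learns (minimalLearner R) R := by
  refine ⟨fun S w hw => ?_, fun r hr => ?_⟩
  · unfold minimalLearner
    split_ifs with h
    · exact h.choose_spec.2.1.2 w hw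
    · exact PRE.mem_lang_ofWords hw
  obtain ⟨T, hTr, hT⟩ := exists_finset_separating hR r.lang
  refine ⟨T, hTr, fun S hTS hSr => ?_⟩
  have hr_cons : r.lang ∈ consistentLangs R S := ⟨⟨r, hr, rfl⟩, hSr⟩
  have h : ∃ r ∈ R, Minimal (· ∈ consistentLangs R S) r.lang := by
    obtain ⟨_, -, hmin⟩ := (hR.subset (Set.sep_subset _ _)).exists_le_minimal hr_cons
    obtain ⟨r₀, hr₀, hr₀L⟩ := hmin.1.1
    exact ⟨r₀, hr₀, hr₀L ▸ hmin⟩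
  have hmin : Minimal (· ∈ consistentLangs R S) (minimalLearner R S).lang := by
    rw [minimalLearner, dif_pos h]
    exact h.choose_spec.2
  have hle : r.lang ≤ (minimalLearner R S).lang :=
    hT _ hmin.1.1 fun w hw => hmin.1.2 w (hTS hw)
  exact le_antisymm (hmin.2 hr_cons hle) hle

end Learning

/-- For every k and every finite alphabet, the class of languages definable by
deterministic k-OREs is finite up to language equivalence; consequently the class of
deterministic k-OREs is learnable in the limit from positive data. -/
theorem stmt6 {α : Type} [Fintype α] [DecidableEq α] (k : ℕ) :
    {L : Language α | ∃ r : PRE α, r.Deterministic ∧ PRE.IsKORE k r ∧ r.lang = L}.Finite ∧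
    ∃ M : Finset (List α) → PRE α,
      Learns M {r : PRE α | r.Deterministic ∧ PRE.IsKORE k r} := by
  have hfin : (PRE.lang '' {r : PRE α | r.Deterministic ∧ r.IsKORE k}).Finite :=
    (PRE.finite_lang_image_setOf_isKORE k).subset (Set.image_mono fun _ hr => hr.2)
  refine ⟨hfin.subset ?_, minimalLearner _, learns_minimalLearner hfin⟩
  rintro _ ⟨r, hdet, hk, rfl⟩
  exact ⟨r, ⟨hdet, hk⟩, rfl⟩
end

section
/- Let A = {a₁,…,aₙ} be n distinct letters and r₁ = (a₁a₂ + a₃ + ⋯ + aₙ)⁺. For every word w over B = A ∖ {a₁,a₂}, the language L(r₁) ∖ {w} is regular, and in particular is defined by the expression r_w := r_w¹ + b₁(ε + r_w² + b₂(ε + r_w³ + ⋯ + b_{m−1}(ε + r_w^m + b_m·r₁)⋯)) where w = b₁⋯b_m and r_wⁱ := (a₁a₂ + (B∖{bᵢ}))·(a₁a₂ + a₃ + ⋯ + aₙ)*; that is, L(r_w) = L(r₁) ∖ {w}. -/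
open Computability

/-- Disjunction of the letters in a list. -/
def bigAlt {n : ℕ} : List (Fin n) → PRE (Fin n)
  | [] => .empty
  | [x] => .char x
  | x :: y :: xs => .alt (.char x) (bigAlt (y :: xs))

/-- The list of letters of B = A ∖ {a₁, a₂} (letters a₃, …, aₙ). -/
def Blist (n : ℕ) : List (Fin n) := (List.finRange n).drop 2

/-- The expression a₁a₂ + a₃ + ⋯ + aₙ. -/
def coreRE (n : ℕ) (h : 2 ≤ n) : PRE (Fin n) :=
  .alt (.cat (.char ⟨0, by omega⟩) (.char ⟨1, by omega⟩)) (bigAlt (Blist n))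

/-- The expression r₁ = (a₁a₂ + a₃ + ⋯ + aₙ)⁺. -/
def r1 (n : ℕ) (h : 2 ≤ n) : PRE (Fin n) := .pos (coreRE n h)

/-- r_wⁱ = (a₁a₂ + (B ∖ {b}))·(a₁a₂ + a₃ + ⋯ + aₙ)*, accepting all words of L(r₁)
that do not start with b.  (Here s* abbreviates (s⁺)?.) -/
def rwi (n : ℕ) (h : 2 ≤ n) (b : Fin n) : PRE (Fin n) :=
  .cat (.alt (.cat (.char ⟨0, by omega⟩) (.char ⟨1, by omega⟩))
          (bigAlt ((Blist n).filter (· ≠ b))))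
    (.opt (.pos (coreRE n h)))

/-- The nested tail Y of the expression r_w:
Y(b_i ⋯ b_m) = ε + r_wⁱ + bᵢ·Y(b_{i+1} ⋯ b_m), with Y(ε) = r₁. -/
def rexclTail (n : ℕ) (h : 2 ≤ n) : List (Fin n) → PRE (Fin n)
  | [] => r1 n h
  | b :: rest => .alt .eps (.alt (rwi n h b) (.cat (.char b) (rexclTail n h rest)))

/-- The expression r_w = r_w¹ + b₁(ε + r_w² + b₂(⋯ + b_m·r₁ ⋯)) for w = b₁ ⋯ b_m. -/
def rexcl (n : ℕ) (h : 2 ≤ n) : List (Fin n) → PRE (Fin n)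
  | [] => .empty
  | b :: rest => .alt (rwi n h b) (.cat (.char b) (rexclTail n h rest))


section Aux

/-! ### Auxiliary lemmas -/

lemma lang_alt {α : Type} (r s : PRE α) : (PRE.alt r s).lang = r.lang + s.lang := rfl
lemma lang_cat {α : Type} (r s : PRE α) : (PRE.cat r s).lang = r.lang * s.lang := rfl
lemma lang_opt {α : Type} (r : PRE α) : (PRE.opt r).lang = r.lang + 1 := rfl
lemma lang_pos {α : Type} (r : PRE α) : (PRE.pos r).lang = r.lang * r.lang∗ := rfl
lemma lang_eps {α : Type} : (PRE.eps : PRE α).lang = 1 := rfl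
lemma mem_char {α : Type} (a : α) (v : List α) : v ∈ (PRE.char a).lang ↔ v = [a] := Iff.rfl

lemma mem_Blist {n : ℕ} (b : Fin n) : b ∈ Blist n ↔ 2 ≤ (b : ℕ) := by
  unfold Blist
  rw [List.mem_iff_getElem]
  constructor
  · rintro ⟨i, hi, rfl⟩
    simp
  · intro h
    have hb := b.isLt
    refine ⟨(b : ℕ) - 2, ?_, ?_⟩
    · simp; omega
    · simp; apply Fin.ext; simp; omega

lemma mem_bigAlt {n : ℕ} : ∀ (l : List (Fin n)) (v : List (Fin n)),
    v ∈ (bigAlt l).lang ↔ ∃ x ∈ l, v = [x]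
  | [], v => by simp [bigAlt, PRE.lang]
  | [x], v => by
    rw [bigAlt, mem_char]
    simp
  | x :: y :: xs, v => by
    rw [bigAlt, lang_alt, Language.mem_add, mem_char, mem_bigAlt (y :: xs) v]
    simp only [List.mem_cons]
    constructor
    · rintro (rfl | ⟨c, hc, rfl⟩)
      · exact ⟨x, Or.inl rfl, rfl⟩
      · exact ⟨c, Or.inr hc, rfl⟩
    · rintro ⟨c, (rfl | hc), rfl⟩
      · left; rfl
      · right; exact ⟨c, hc, rfl⟩

lemma mem_core {n : ℕ} (hn : 2 ≤ n) (v : List (Fin n)) :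
    v ∈ (coreRE n hn).lang ↔
      v = [⟨0, by omega⟩, ⟨1, by omega⟩] ∨ ∃ b : Fin n, 2 ≤ (b : ℕ) ∧ v = [b] := by
  rw [coreRE, lang_alt, Language.mem_add, lang_cat, Language.mem_mul, mem_bigAlt]
  constructor
  · rintro (⟨a, ha, c, hc, rfl⟩ | ⟨x, hx, rfl⟩)
    · have ha' : a = [⟨0, by omega⟩] := ha
      have hc' : c = [⟨1, by omega⟩] := hc
      subst ha'; subst hc'; left; rfl
    · right; exact ⟨x, (mem_Blist x).1 hx, rfl⟩
  · rintro (rfl | ⟨c, hc, rfl⟩)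
    · left; exact ⟨_, rfl, _, rfl, rfl⟩
    · right; exact ⟨c, (mem_Blist c).2 hc, rfl⟩

lemma core_ne_nil {n : ℕ} (hn : 2 ≤ n) {v : List (Fin n)}
    (h : v ∈ (coreRE n hn).lang) : v ≠ [] := by
  rcases (mem_core hn v).1 h with rfl | ⟨b, _, rfl⟩ <;> simp

lemma r1_lang {n : ℕ} (hn : 2 ≤ n) :
    (r1 n hn).lang = (coreRE n hn).lang * (coreRE n hn).lang∗ := rfl

lemma kstar_split {α : Type} (C : Language α) (v : List α) :
    v ∈ C∗ ↔ v = [] ∨ v ∈ C * C∗ := by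
  conv_lhs => rw [← Language.one_add_self_mul_kstar_eq_kstar (l := C)]
  rw [Language.mem_add, Language.mem_one]

lemma mem_r1_iff {n : ℕ} (hn : 2 ≤ n) (v : List (Fin n)) :
    v ∈ (r1 n hn).lang ↔ v ∈ (coreRE n hn).lang∗ ∧ v ≠ [] := by
  rw [r1_lang]
  constructor
  · intro hv
    refine ⟨(kstar_split _ v).2 (Or.inr hv), ?_⟩
    rcases Language.mem_mul.1 hv with ⟨a, ha, c, hc, rfl⟩
    have := core_ne_nil hn ha
    simp [this]
  · rintro ⟨hv, hne⟩
    rcases (kstar_split _ v).1 hv with rfl | h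
    · exact absurd rfl hne
    · exact h

lemma mem_rwi {n : ℕ} (hn : 2 ≤ n) (b : Fin n) (hb : 2 ≤ (b : ℕ)) (v : List (Fin n)) :
    v ∈ (rwi n hn b).lang ↔ v ∈ (r1 n hn).lang ∧ ∀ t, v ≠ b :: t := by
  have hS : ∀ y : List (Fin n),
      y ∈ ((coreRE n hn).lang * (coreRE n hn).lang∗ + 1) ↔ y ∈ (coreRE n hn).lang∗ := by
    intro y
    rw [Language.mem_add, Language.mem_one, kstar_split]
    tauto
  rw [rwi, lang_cat, Language.mem_mul]
  simp only [lang_alt, lang_cat, lang_opt, lang_pos]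
  constructor
  · rintro ⟨x, hx, y, hy, rfl⟩
    rw [Language.mem_add] at hx
    rw [hS] at hy
    rcases hx with hx | hx
    · rcases Language.mem_mul.1 hx with ⟨p, hp, q, hq, rfl⟩
      have hp' : p = [(⟨0, by omega⟩ : Fin n)] := hp
      have hq' : q = [(⟨1, by omega⟩ : Fin n)] := hq
      subst hp'; subst hq'
      constructor
      · rw [r1_lang]
        refine Language.append_mem_mul ?_ hy
        rw [mem_core hn]; left; rfl
      · intro t h
        simp only [List.cons_append, List.cons.injEq] at h
        have : (b : ℕ) = 0 := by rw [← h.1]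
        omega
    · rcases (mem_bigAlt _ _).1 hx with ⟨c, hc, rfl⟩
      rw [List.mem_filter] at hc
      have hc2 : 2 ≤ (c : ℕ) := (mem_Blist c).1 hc.1
      have hcb : c ≠ b := by simpa using hc.2
      constructor
      · rw [r1_lang]
        refine Language.append_mem_mul ?_ hy
        rw [mem_core hn]; right; exact ⟨c, hc2, rfl⟩
      · intro t h
        simp only [List.cons_append, List.nil_append, List.cons.injEq] at h
        exact hcb h.1
  · rintro ⟨hv, hne⟩
    rw [r1_lang] at hv
    rcases Language.mem_mul.1 hv with ⟨x, hx, y, hy, rfl⟩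
    rcases (mem_core hn x).1 hx with rfl | ⟨c, hc, rfl⟩
    · refine ⟨_, (Language.mem_add _ _ _).2 (Or.inl ?_), y, (hS y).2 hy, rfl⟩
      exact ⟨_, rfl, _, rfl, rfl⟩
    · have hcb : c ≠ b := by
        rintro rfl
        exact hne y rfl
      refine ⟨[c], (Language.mem_add _ _ _).2 (Or.inr ?_), y, (hS y).2 hy, rfl⟩
      rw [mem_bigAlt]
      refine ⟨c, ?_, rfl⟩
      rw [List.mem_filter]
      exact ⟨(mem_Blist c).2 hc, by simpa using hcb⟩

lemma cons_mem_kstar {n : ℕ} (hn : 2 ≤ n) {b : Fin n} {t : List (Fin n)}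
    (hb : 2 ≤ (b : ℕ)) (ht : t ∈ (coreRE n hn).lang∗) :
    (b :: t) ∈ (coreRE n hn).lang∗ := by
  rw [kstar_split]
  right
  refine Language.append_mem_mul (a := [b]) ?_ ht
  rw [mem_core hn]; right; exact ⟨b, hb, rfl⟩

lemma tail_lang {n : ℕ} (hn : 2 ≤ n) :
    ∀ (rest : List (Fin n)), (∀ c ∈ rest, 2 ≤ (c : ℕ)) →
    ∀ v, v ∈ (rexclTail n hn rest).lang ↔ v ∈ (coreRE n hn).lang∗ ∧ v ≠ rest := by
  intro rest
  induction rest with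
  | nil =>
    intro _ v
    rw [rexclTail]
    exact mem_r1_iff hn v
  | cons b rest ih =>
    intro hB v
    have hb : 2 ≤ (b : ℕ) := hB b (by simp)
    have hB' : ∀ c ∈ rest, 2 ≤ (c : ℕ) := fun c hc => hB c (by simp [hc])
    rw [rexclTail, lang_alt, Language.mem_add, lang_alt, Language.mem_add, lang_eps,
      Language.mem_one, lang_cat, Language.mem_mul]
    constructor
    · rintro (rfl | h2 | h3)
      · exact ⟨Language.nil_mem_kstar _, by simp⟩
      · obtain ⟨hr, hne⟩ := (mem_rwi hn b hb v).1 h2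
        exact ⟨((mem_r1_iff hn v).1 hr).1, hne rest⟩
      · rcases h3 with ⟨x, hx, y, hy, rfl⟩
        rw [mem_char] at hx
        subst hx
        obtain ⟨hy1, hy2⟩ := (ih hB' y).1 hy
        refine ⟨cons_mem_kstar hn hb hy1, by simpa using hy2⟩
    · rintro ⟨hv, hne⟩
      rcases (kstar_split _ v).1 hv with rfl | h0
      · left; rfl
      · have hr1 : v ∈ (r1 n hn).lang := by rw [r1_lang]; exact h0
        rcases Language.mem_mul.1 h0 with ⟨x, hx, y, hy, rfl⟩
        rcases (mem_core hn x).1 hx with rfl | ⟨c, hc, rfl⟩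
        · right; left
          rw [mem_rwi hn b hb]
          refine ⟨hr1, fun t h => ?_⟩
          simp only [List.cons_append, List.cons.injEq] at h
          have : (b : ℕ) = 0 := by rw [← h.1]
          omega
        · by_cases hcb : c = b
          · subst hcb
            right; right
            refine ⟨[c], rfl, y, ?_, rfl⟩
            rw [ih hB' y]
            exact ⟨hy, fun h => hne (by simp [h])⟩
          · right; left
            rw [mem_rwi hn b hb]
            refine ⟨hr1, fun t h => ?_⟩
            simp only [List.cons_append, List.nil_append, List.cons.injEq] at h
            exact hcb h.1

end Aux

/-- For every non-empty word w over B = A ∖ {a₁,a₂}, the expression r_w defines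
exactly L(r₁) ∖ {w} (in particular this language is regular). -/
theorem stmt8 (n : ℕ) (hn : 2 ≤ n) (w : List (Fin n)) (hne : w ≠ [])
    (hB : ∀ b ∈ w, 2 ≤ (b : ℕ)) :
    ∀ v : List (Fin n), v ∈ (rexcl n hn w).lang ↔ v ∈ (r1 n hn).lang ∧ v ≠ w := by
  cases w with
  | nil => exact absurd rfl hne
  | cons b rest =>
    intro v
    have hb : 2 ≤ (b : ℕ) := hB b (by simp)
    have hB' : ∀ c ∈ rest, 2 ≤ (c : ℕ) := fun c hc => hB c (by simp [hc])
    rw [rexcl, lang_alt, Language.mem_add, lang_cat, Language.mem_mul]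
    constructor
    · rintro (h2 | h3)
      · obtain ⟨hr, hne'⟩ := (mem_rwi hn b hb v).1 h2
        exact ⟨hr, hne' rest⟩
      · rcases h3 with ⟨x, hx, y, hy, rfl⟩
        rw [mem_char] at hx
        subst hx
        obtain ⟨hy1, hy2⟩ := (tail_lang hn rest hB' y).1 hy
        constructor
        · rw [r1_lang]
          refine Language.append_mem_mul (a := [b]) ?_ hy1
          rw [mem_core hn]; right; exact ⟨b, hb, rfl⟩
        · simpa using hy2
    · rintro ⟨hv, hnev⟩
      have h0 : v ∈ (coreRE n hn).lang * (coreRE n hn).lang∗ := by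
        rw [← r1_lang hn]; exact hv
      rcases Language.mem_mul.1 h0 with ⟨x, hx, y, hy, rfl⟩
      rcases (mem_core hn x).1 hx with rfl | ⟨c, hc, rfl⟩
      · left
        rw [mem_rwi hn b hb]
        refine ⟨hv, fun t h => ?_⟩
        simp only [List.cons_append, List.cons.injEq] at h
        have : (b : ℕ) = 0 := by rw [← h.1]
        omega
      · by_cases hcb : c = b
        · subst hcb
          right
          refine ⟨[c], rfl, y, ?_, rfl⟩
          rw [tail_lang hn rest hB' y]
          exact ⟨hy, fun h => hnev (by simp [h])⟩
        · left
          rw [mem_rwi hn b hb]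
          refine ⟨hv, fun t h => ?_⟩
          simp only [List.cons_append, List.nil_append, List.cons.injEq] at h
          exact hcb h.1
end

section
/- If S_r is characteristic for r under an algorithm M that learns in the limit a class, and there exists r′ in the learned class with L(r′) = L(r) ∖ {w} for some w ∈ L(r), then w ∈ S_r. -/
open Computability

/-- `Sr` is a characteristic sample for `r` under `M`. -/
def IsCharSample {α : Type} (M : Finset (List α) → PRE α) (r : PRE α)
    (Sr : Finset (List α)) : Prop :=
  (∀ w ∈ Sr, w ∈ r.lang) ∧
  ∀ S : Finset (List α), Sr ⊆ S → (∀ w ∈ S, w ∈ r.lang) → (M S).lang = r.lang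

/-- If M learns a class containing expressions for both L(r) and L(r) ∖ {w}
(w ∈ L(r)), then every characteristic sample S_r for r must contain w. -/
theorem stmt10 {α : Type} (M : Finset (List α) → PRE α) (R : Set (PRE α))
    (hM : Learns M R) (r : PRE α) (hr : r ∈ R)
    (Sr : Finset (List α)) (hSr : IsCharSample M r Sr)
    (w : List α) (hw : w ∈ r.lang)
    (r' : PRE α) (hr' : r' ∈ R)
    (hL : ∀ v : List α, v ∈ r'.lang ↔ v ∈ r.lang ∧ v ≠ w) :
    w ∈ Sr := by
  classical
  by_contra hwS
  obtain ⟨Sr', hSr'1, hSr'2⟩ := hM.2 r' hr'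
  set S := Sr ∪ Sr' with hS
  have hSr_ne : ∀ v ∈ Sr, v ≠ w := fun v hv hvw => hwS (hvw ▸ hv)
  have hSsub_r : ∀ v ∈ S, v ∈ r.lang := by
    intro v hv
    rcases Finset.mem_union.mp hv with h | h
    · exact hSr.1 v h
    · exact ((hL v).mp (hSr'1 v h)).1
  have hSsub_r' : ∀ v ∈ S, v ∈ r'.lang := by
    intro v hv
    rcases Finset.mem_union.mp hv with h | h
    · exact (hL v).mpr ⟨hSr.1 v h, hSr_ne v h⟩
    · exact hSr'1 v h
  have h1 : (M S).lang = r.lang := hSr.2 S Finset.subset_union_left hSsub_r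
  have h2 : (M S).lang = r'.lang := hSr'2 S Finset.subset_union_right hSsub_r'
  have : w ∈ r'.lang := h2 ▸ h1.symm ▸ hw
  exact ((hL w).mp this).2 rfl
end

section
/- A word x₁x₂⋯xₙ (n ≥ 1) over the marked alphabet belongs to L(r̄) if and only if x₁ ∈ first(r̄), x_{p+1} ∈ follow(r̄, x_p) for all 1 ≤ p < n, and xₙ ∈ last(r̄); and ε ∈ L(r̄) iff ε ∈ L(r). -/
open Computability

/-- Whether ε ∈ L(r). -/
def PRE.nullable {α : Type} : PRE α → Bool
  | .empty => false
  | .eps => true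
  | .char _ => false
  | .paren r => r.nullable
  | .cat r s => r.nullable && s.nullable
  | .alt r s => r.nullable || s.nullable
  | .opt _ => true
  | .pos r => r.nullable

/-- pos(r): the set of symbols occurring in r. -/
def PRE.posFin {α : Type} [DecidableEq α] : PRE α → Finset α
  | .empty => ∅
  | .eps => ∅
  | .char a => {a}
  | .paren r => r.posFin
  | .cat r s => r.posFin ∪ s.posFin
  | .alt r s => r.posFin ∪ s.posFin
  | .opt r => r.posFin
  | .pos r => r.posFin

/-- first(r): symbols that can start a word of L(r). -/
def PRE.firstFin {α : Type} [DecidableEq α] : PRE α → Finset α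
  | .empty => ∅
  | .eps => ∅
  | .char a => {a}
  | .paren r => r.firstFin
  | .cat r s => if r.nullable then r.firstFin ∪ s.firstFin else r.firstFin
  | .alt r s => r.firstFin ∪ s.firstFin
  | .opt r => r.firstFin
  | .pos r => r.firstFin

/-- last(r): symbols that can end a word of L(r). -/
def PRE.lastFin {α : Type} [DecidableEq α] : PRE α → Finset α
  | .empty => ∅
  | .eps => ∅
  | .char a => {a}
  | .paren r => r.lastFin
  | .cat r s => if s.nullable then r.lastFin ∪ s.lastFin else s.lastFin
  | .alt r s => r.lastFin ∪ s.lastFin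
  | .opt r => r.lastFin
  | .pos r => r.lastFin

/-- follow(r, x): symbols that can follow the symbol x in a word of L(r). -/
def PRE.followFin {α : Type} [DecidableEq α] : PRE α → α → Finset α
  | .empty, _ => ∅
  | .eps, _ => ∅
  | .char _, _ => ∅
  | .paren r, x => r.followFin x
  | .cat r s, x =>
      if x ∈ r.posFin then
        (if x ∈ r.lastFin then r.followFin x ∪ s.firstFin else r.followFin x)
      else s.followFin x
  | .alt r s, x => if x ∈ r.posFin then r.followFin x else s.followFin x
  | .opt r, x => r.followFin x
  | .pos r, x =>
      if x ∈ r.lastFin then r.followFin x ∪ r.firstFin else r.followFin x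

/-!
For a linear expression, `L(r)` coincides with the local language cut out by `nullable`,
`first`, `last` and `follow`, because the two satisfy the same equations along the structure of
`r`. For `r + s` and `r · s` this rests on the positions of `r` and `s` being disjoint: a
follow-chain of `r + s` stays in the operand it starts in, and one of `r · s` that starts in `r`
leaves `r` at most once, by a step from `last r` to `first s`, and then stays in `s`. A
follow-chain of `r⁺` is cut at its steps from `last r` to `first r` into follow-chains of `r`.
-/

namespace List

variable {α : Type*} {P : α → Prop} {R S B : α → α → Prop}

theorem IsChain.cons_split (H : ∀ p q, P p → R p q → S p q ∧ P q ∨ B p q) :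
    ∀ {x : α} {l : List α}, P x → IsChain R (x :: l) →
      (IsChain S (x :: l) ∧ ∀ a ∈ x :: l, P a) ∨
        ∃ u y v, l = u ++ y :: v ∧ IsChain S (x :: u) ∧
          B ((x :: u).getLast (cons_ne_nil x u)) y ∧ IsChain R (y :: v)
  | x, [], hx, _ => .inl ⟨.singleton x, by simpa using hx⟩
  | x, y :: l, hx, h => by
    rw [isChain_cons_cons] at h
    rcases H x y hx h.1 with ⟨hS, hy⟩ | hB
    · rcases cons_split H hy h.2 with ⟨hc, hall⟩ | ⟨u, z, v, rfl, hc, hB, hR⟩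
      · exact .inl ⟨hc.cons_cons hS, by simpa [hx] using hall⟩
      · exact .inr ⟨y :: u, z, v, rfl, hc.cons_cons hS, by simpa using hB, hR⟩
    · exact .inr ⟨[], y, l, rfl, .singleton x, hB, h.2⟩

theorem IsChain.cons_imp_of_closed (H : ∀ p q, P p → R p q → S p q ∧ P q)
    {x : α} {l : List α} (hx : P x) (h : IsChain R (x :: l)) :
    IsChain S (x :: l) ∧ ∀ a ∈ x :: l, P a := by
  rcases h.cons_split (B := fun _ _ => False) (fun p q hp hpq => .inl (H p q hp hpq)) hx with
    h | ⟨-, -, -, -, -, hB, -⟩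
  exacts [h, hB.elim]

end List

namespace PRE

variable {β : Type} [DecidableEq β] {r s : PRE β} {x p q : β} {l u v : List β}

def Follows (r : PRE β) (p q : β) : Prop := q ∈ r.followFin p

def glushkovLang (r : PRE β) : Language β :=
  {w | (w = [] → r.nullable = true) ∧ (∀ a ∈ w.head?, a ∈ r.firstFin) ∧
    w.IsChain r.Follows ∧ ∀ a ∈ w.getLast?, a ∈ r.lastFin}

theorem mem_glushkovLang {w : List β} : w ∈ r.glushkovLang ↔
    (w = [] → r.nullable = true) ∧ (∀ a ∈ w.head?, a ∈ r.firstFin) ∧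
      w.IsChain r.Follows ∧ ∀ a ∈ w.getLast?, a ∈ r.lastFin :=
  Iff.rfl

theorem nil_mem_glushkovLang : [] ∈ r.glushkovLang ↔ r.nullable = true := by
  simp [mem_glushkovLang]

theorem cons_mem_glushkovLang : x :: l ∈ r.glushkovLang ↔
    x ∈ r.firstFin ∧ (x :: l).IsChain r.Follows ∧
      (x :: l).getLast (List.cons_ne_nil x l) ∈ r.lastFin := by
  simp [mem_glushkovLang, List.getLast?_eq_some_getLast]

theorem firstFin_subset_posFin (r : PRE β) : r.firstFin ⊆ r.posFin := by
  induction r <;> grind [firstFin, posFin]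

theorem lastFin_subset_posFin (r : PRE β) : r.lastFin ⊆ r.posFin := by
  induction r <;> grind [lastFin, posFin]

theorem followFin_subset_posFin (r : PRE β) (p : β) : r.followFin p ⊆ r.posFin := by
  induction r <;> grind [followFin, posFin, firstFin_subset_posFin]

theorem mem_posFin_iff_rep_pos : p ∈ r.posFin ↔ 0 < r.rep p := by
  induction r <;> grind [posFin, rep]

theorem rep_le_one_left (h : ∀ b, r.rep b + s.rep b ≤ 1) (b : β) : r.rep b ≤ 1 :=
  (Nat.le_add_right _ _).trans (h b)

theorem rep_le_one_right (h : ∀ b, r.rep b + s.rep b ≤ 1) (b : β) : s.rep b ≤ 1 :=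
  (Nat.le_add_left _ _).trans (h b)

theorem disjoint_posFin_of_rep_add_le_one (h : ∀ b, r.rep b + s.rep b ≤ 1) :
    Disjoint r.posFin s.posFin :=
  Finset.disjoint_left.2 fun p hr hs => by
    have := h p
    rw [mem_posFin_iff_rep_pos] at hr hs
    omega

theorem mem_posFin_of_mem_glushkovLang {w : List β} (hw : w ∈ r.glushkovLang) {a : β}
    (ha : a ∈ w) : a ∈ r.posFin := by
  obtain ⟨-, hfirst, hchain, -⟩ := hw
  refine hchain.induction _ _ (fun p q hpq _ => followFin_subset_posFin r p hpq)
    (fun hne => ?_) a ha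
  exact firstFin_subset_posFin r (hfirst _ (List.head?_eq_some_head hne))

theorem isChain_follows_cons_iff {g : PRE β}
    (hgr : ∀ p ∈ r.posFin, g.followFin p = r.followFin p) (hx : x ∈ r.posFin) :
    (x :: l).IsChain g.Follows ↔ (x :: l).IsChain r.Follows := by
  constructor <;> refine fun h =>
    (h.cons_imp_of_closed (P := (· ∈ r.posFin)) (fun p q hp hpq => ?_) hx).1
  · rw [Follows, hgr p hp] at hpq
    exact ⟨hpq, followFin_subset_posFin r p hpq⟩
  · exact ⟨by rwa [Follows, hgr p hp], followFin_subset_posFin r p hpq⟩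

theorem getLast_mem_posFin (h : (x :: l).IsChain r.Follows) (hx : x ∈ r.posFin) :
    (x :: l).getLast (List.cons_ne_nil x l) ∈ r.posFin :=
  (h.cons_imp_of_closed (P := (· ∈ r.posFin)) (S := r.Follows)
    (fun p _ _ hpq => ⟨hpq, followFin_subset_posFin r p hpq⟩) hx).2 _ (List.getLast_mem _)

theorem mem_followFin_cat_of_mem_left (hp : p ∈ r.posFin) :
    q ∈ (r.cat s).followFin p ↔
      q ∈ r.followFin p ∨ p ∈ r.lastFin ∧ q ∈ s.firstFin := by
  by_cases hl : p ∈ r.lastFin <;> simp [followFin, hp, hl]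

theorem followFin_cat_of_not_mem (hp : p ∉ r.posFin) : (r.cat s).followFin p = s.followFin p :=
  if_neg hp

theorem mem_followFin_pos :
    q ∈ r.pos.followFin p ↔ q ∈ r.followFin p ∨ p ∈ r.lastFin ∧ q ∈ r.firstFin := by
  by_cases hl : p ∈ r.lastFin <;> simp [followFin, hl]

theorem mem_firstFin_cat_of_mem_left (hd : Disjoint r.posFin s.posFin) (hp : p ∈ r.posFin) :
    p ∈ (r.cat s).firstFin ↔ p ∈ r.firstFin := by
  have := mt (firstFin_subset_posFin s ·) (Finset.disjoint_left.1 hd hp)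
  simp only [firstFin]
  split_ifs <;> simp [*]

theorem mem_firstFin_cat_of_mem_right (hd : Disjoint r.posFin s.posFin) (hp : p ∈ s.posFin) :
    p ∈ (r.cat s).firstFin ↔ r.nullable ∧ p ∈ s.firstFin := by
  have := mt (firstFin_subset_posFin r ·) (Finset.disjoint_right.1 hd hp)
  simp only [firstFin]
  split_ifs <;> simp [*]

theorem mem_lastFin_cat_of_mem_left (hd : Disjoint r.posFin s.posFin) (hp : p ∈ r.posFin) :
    p ∈ (r.cat s).lastFin ↔ s.nullable ∧ p ∈ r.lastFin := by
  have := mt (lastFin_subset_posFin s ·) (Finset.disjoint_left.1 hd hp)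
  simp only [lastFin]
  split_ifs <;> simp [*]

theorem mem_lastFin_cat_of_mem_right (hd : Disjoint r.posFin s.posFin) (hp : p ∈ s.posFin) :
    p ∈ (r.cat s).lastFin ↔ p ∈ s.lastFin := by
  have := mt (lastFin_subset_posFin r ·) (Finset.disjoint_right.1 hd hp)
  simp only [lastFin]
  split_ifs <;> simp [*]

theorem append_mem_glushkovLang_cat (hd : Disjoint r.posFin s.posFin) (hu : u ∈ r.glushkovLang)
    (hv : v ∈ s.glushkovLang) : u ++ v ∈ (r.cat s).glushkovLang := by
  have hur {a} (ha : a ∈ u) := mem_posFin_of_mem_glushkovLang hu ha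
  have hvs {a} (ha : a ∈ v) := mem_posFin_of_mem_glushkovLang hv ha
  obtain ⟨hu0, hu1, hu2, hu3⟩ := hu
  obtain ⟨hv0, hv1, hv2, hv3⟩ := hv
  refine ⟨fun h => ?_, fun a ha => ?_, .append ?_ ?_ fun a ha b hb => ?_, fun a ha => ?_⟩
  · simp_all [nullable]
  · rcases u with _ | ⟨b, u⟩
    · exact (mem_firstFin_cat_of_mem_right hd (hvs (List.mem_of_mem_head? ha))).2
        ⟨hu0 rfl, hv1 a ha⟩
    · obtain rfl : b = a := by simpa using ha
      exact (mem_firstFin_cat_of_mem_left hd (hur List.mem_cons_self)).2 (hu1 b rfl)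
  · exact hu2.imp_of_mem_imp fun p q hp _ hpq =>
      (mem_followFin_cat_of_mem_left (hur hp)).2 (.inl hpq)
  · exact hv2.imp_of_mem_imp fun p q hp _ hpq => by
      rwa [Follows, followFin_cat_of_not_mem (Finset.disjoint_right.1 hd (hvs hp))]
  · exact (mem_followFin_cat_of_mem_left (lastFin_subset_posFin r (hu3 a ha))).2
      (.inr ⟨hu3 a ha, hv1 b hb⟩)
  · rw [List.getLast?_append] at ha
    cases hlast : v.getLast? with
    | none =>
      rw [hlast, Option.none_or] at ha
      exact (mem_lastFin_cat_of_mem_left hd (hur (List.mem_of_mem_getLast? ha))).2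
        ⟨hv0 (List.getLast?_eq_none_iff.1 hlast), hu3 a ha⟩
    | some b =>
      rw [hlast, Option.some_or, Option.mem_some_iff] at ha
      subst ha
      exact (mem_lastFin_cat_of_mem_right hd (hvs (List.mem_of_mem_getLast? hlast))).2
        (hv3 _ hlast)

theorem cons_mem_glushkovLang_of_cat_right (hd : Disjoint r.posFin s.posFin)
    (hx : x ∈ s.firstFin) (hc : (x :: l).IsChain (r.cat s).Follows)
    (hl : (x :: l).getLast (List.cons_ne_nil x l) ∈ (r.cat s).lastFin) :
    x :: l ∈ s.glushkovLang := by
  have hxs := firstFin_subset_posFin s hx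
  have hcs := (isChain_follows_cons_iff
    (fun p hp => followFin_cat_of_not_mem (Finset.disjoint_right.1 hd hp)) hxs).1 hc
  exact cons_mem_glushkovLang.2
    ⟨hx, hcs, (mem_lastFin_cat_of_mem_right hd (getLast_mem_posFin hcs hxs)).1 hl⟩

theorem mem_mul_of_mem_glushkovLang_cat (hd : Disjoint r.posFin s.posFin) {w : List β}
    (hw : w ∈ (r.cat s).glushkovLang) : w ∈ r.glushkovLang * s.glushkovLang := by
  rcases w with _ | ⟨x, l⟩
  · obtain ⟨hr, hs⟩ : r.nullable ∧ s.nullable := by simpa [nullable] using hw.1 rfl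
    exact ⟨[], nil_mem_glushkovLang.2 hr, [], nil_mem_glushkovLang.2 hs, rfl⟩
  obtain ⟨hx, hc, hl⟩ := cons_mem_glushkovLang.1 hw
  by_cases hxr : x ∈ r.posFin
  · have hxf := (mem_firstFin_cat_of_mem_left hd hxr).1 hx
    have H p q (hp : p ∈ r.posFin) (hpq : (r.cat s).Follows p q) :
        r.Follows p q ∧ q ∈ r.posFin ∨ p ∈ r.lastFin ∧ q ∈ s.firstFin :=
      ((mem_followFin_cat_of_mem_left hp).1 hpq).imp_left fun h =>
        ⟨h, followFin_subset_posFin r p h⟩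
    rcases hc.cons_split H hxr with ⟨hcr, hall⟩ | ⟨u, y, v, rfl, hcu, ⟨hul, hy⟩, hcv⟩
    · obtain ⟨hsn, hlr⟩ := (mem_lastFin_cat_of_mem_left hd (hall _ (List.getLast_mem _))).1 hl
      exact ⟨x :: l, cons_mem_glushkovLang.2 ⟨hxf, hcr, hlr⟩, [], nil_mem_glushkovLang.2 hsn,
        List.append_nil _⟩
    · refine ⟨x :: u, cons_mem_glushkovLang.2 ⟨hxf, hcu, hul⟩, y :: v,
        cons_mem_glushkovLang_of_cat_right hd hy hcv ?_, rfl⟩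
      simpa using hl
  · have hxs : x ∈ s.posFin := by
      simpa [posFin, hxr] using firstFin_subset_posFin (r.cat s) hx
    obtain ⟨hrn, hxf⟩ := (mem_firstFin_cat_of_mem_right hd hxs).1 hx
    exact ⟨[], nil_mem_glushkovLang.2 hrn, x :: l,
      cons_mem_glushkovLang_of_cat_right hd hxf hc hl, rfl⟩

theorem glushkovLang_cat (hd : Disjoint r.posFin s.posFin) :
    (r.cat s).glushkovLang = r.glushkovLang * s.glushkovLang := by
  refine le_antisymm (fun w => mem_mul_of_mem_glushkovLang_cat hd) ?_
  rintro _ ⟨u, hu, v, hv, rfl⟩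
  exact append_mem_glushkovLang_cat hd hu hv

theorem cons_mem_glushkovLang_alt_left (hd : Disjoint r.posFin s.posFin) (hx : x ∈ r.posFin) :
    x :: l ∈ (r.alt s).glushkovLang ↔ x :: l ∈ r.glushkovLang := by
  have hs {p} (hp : p ∈ r.posFin) : p ∉ s.firstFin ∧ p ∉ s.lastFin :=
    have h := Finset.disjoint_left.1 hd hp
    ⟨mt (firstFin_subset_posFin s ·) h, mt (lastFin_subset_posFin s ·) h⟩
  rw [cons_mem_glushkovLang, cons_mem_glushkovLang,
    isChain_follows_cons_iff (g := r.alt s) (fun p hp => if_pos hp) hx]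
  simp only [firstFin, lastFin, Finset.mem_union, (hs hx).1, or_false]
  exact and_congr_right fun _ => and_congr_right fun hc =>
    or_iff_left (hs (getLast_mem_posFin hc hx)).2

theorem cons_mem_glushkovLang_alt_right (hd : Disjoint r.posFin s.posFin) (hx : x ∈ s.posFin) :
    x :: l ∈ (r.alt s).glushkovLang ↔ x :: l ∈ s.glushkovLang := by
  have hr {p} (hp : p ∈ s.posFin) : p ∉ r.firstFin ∧ p ∉ r.lastFin :=
    have h := Finset.disjoint_right.1 hd hp
    ⟨mt (firstFin_subset_posFin r ·) h, mt (lastFin_subset_posFin r ·) h⟩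
  rw [cons_mem_glushkovLang, cons_mem_glushkovLang,
    isChain_follows_cons_iff (g := r.alt s)
      (fun p hp => if_neg (Finset.disjoint_right.1 hd hp)) hx]
  simp only [firstFin, lastFin, Finset.mem_union, (hr hx).1, false_or]
  exact and_congr_right fun _ => and_congr_right fun hc =>
    or_iff_right (hr (getLast_mem_posFin hc hx)).2

theorem glushkovLang_alt (hd : Disjoint r.posFin s.posFin) :
    (r.alt s).glushkovLang = r.glushkovLang + s.glushkovLang := by
  have head_mem {g : PRE β} {x : β} {l : List β} (h : x :: l ∈ g.glushkovLang) :
      x ∈ g.posFin :=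
    firstFin_subset_posFin g (cons_mem_glushkovLang.1 h).1
  ext (_ | ⟨x, l⟩) <;> rw [Language.mem_add]
  · simp [nil_mem_glushkovLang, nullable]
  constructor
  · intro h
    rcases Finset.mem_union.1 (head_mem h) with hx | hx
    exacts [.inl ((cons_mem_glushkovLang_alt_left hd hx).1 h),
      .inr ((cons_mem_glushkovLang_alt_right hd hx).1 h)]
  · rintro (h | h)
    exacts [(cons_mem_glushkovLang_alt_left hd (head_mem h)).2 h,
      (cons_mem_glushkovLang_alt_right hd (head_mem h)).2 h]

theorem glushkovLang_le_glushkovLang_pos : r.glushkovLang ≤ r.pos.glushkovLang :=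
  fun _ ⟨h0, h1, h2, h3⟩ => ⟨h0, h1, h2.imp fun _ _ h => mem_followFin_pos.2 (.inl h), h3⟩

theorem glushkovLang_pos_mul_self_le :
    r.pos.glushkovLang * r.pos.glushkovLang ≤ r.pos.glushkovLang := by
  rintro _ ⟨u, ⟨hu0, hu1, hu2, hu3⟩, v, ⟨hv0, hv1, hv2, hv3⟩, rfl⟩
  refine ⟨fun h => hu0 (List.append_eq_nil_iff.1 h).1, fun a ha => ?_,
    .append hu2 hv2 fun a ha b hb => mem_followFin_pos.2 (.inr ⟨hu3 a ha, hv1 b hb⟩),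
    fun a ha => ?_⟩
  · rcases u with _ | ⟨b, u⟩
    exacts [hv1 a ha, hu1 a (by simpa using ha)]
  · rcases v with _ | ⟨b, v⟩
    exacts [hu3 a (by simpa using ha), hv3 a (by simpa using ha)]

theorem mem_mul_kstar_of_mem_glushkovLang_pos {w : List β} (h : w ∈ r.pos.glushkovLang) :
    w ∈ r.glushkovLang * r.glushkovLang∗ := by
  induction hn : w.length using Nat.strong_induction_on generalizing w with | _ n ih
  rcases w with _ | ⟨x, l⟩
  · exact ⟨[], nil_mem_glushkovLang.2 (nil_mem_glushkovLang (r := r.pos).1 h), [],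
      Language.nil_mem_kstar _, rfl⟩
  obtain ⟨hx, hc, hl⟩ := cons_mem_glushkovLang.1 h
  rcases hc.cons_split (P := fun _ => True) (S := r.Follows)
      (fun p q _ hpq => (mem_followFin_pos.1 hpq).imp_left (⟨·, trivial⟩)) trivial with
    ⟨hc, -⟩ | ⟨u, y, v, rfl, hcu, ⟨hul, hy⟩, hcv⟩
  · exact ⟨x :: l, cons_mem_glushkovLang.2 ⟨hx, hc, hl⟩, [], Language.nil_mem_kstar _,
      List.append_nil _⟩
  · have hyv : y :: v ∈ r.pos.glushkovLang :=
      cons_mem_glushkovLang.2 ⟨hy, hcv, by simpa using hl⟩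
    have hlen : (y :: v).length < n := by simp [← hn]
    exact ⟨x :: u, cons_mem_glushkovLang.2 ⟨hx, hcu, hul⟩, y :: v,
      mul_kstar_le_kstar (a := r.glushkovLang) (ih _ hlen hyv rfl), rfl⟩

theorem glushkovLang_pos : r.pos.glushkovLang = r.glushkovLang * r.glushkovLang∗ := by
  refine le_antisymm (fun _ => mem_mul_kstar_of_mem_glushkovLang_pos)
    (mul_kstar_le glushkovLang_le_glushkovLang_pos ?_)
  calc r.pos.glushkovLang * r.glushkovLang
      ≤ r.pos.glushkovLang * r.pos.glushkovLang := by
        gcongr; exact glushkovLang_le_glushkovLang_pos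
    _ ≤ r.pos.glushkovLang := glushkovLang_pos_mul_self_le

theorem glushkovLang_empty : (empty : PRE β).glushkovLang = 0 := by
  ext (_ | ⟨x, l⟩) <;> simp [mem_glushkovLang, nullable, firstFin]

theorem glushkovLang_eps : (eps : PRE β).glushkovLang = 1 := by
  ext (_ | ⟨x, l⟩) <;> simp [mem_glushkovLang, nullable, firstFin]

theorem glushkovLang_char (a : β) : (char a).glushkovLang = {[a]} := by
  ext w
  change _ ↔ w = [a]
  rcases w with _ | ⟨x, _ | ⟨y, l⟩⟩ <;>
    simp [mem_glushkovLang, nullable, firstFin, lastFin, Follows, followFin]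

theorem glushkovLang_opt : r.opt.glushkovLang = r.glushkovLang + 1 := by
  ext (_ | ⟨x, l⟩) <;> rw [Language.mem_add, Language.mem_one]
  · simp [nil_mem_glushkovLang, nullable]
  · simpa using
      (cons_mem_glushkovLang (r := r.opt)).trans (cons_mem_glushkovLang (r := r)).symm

theorem lang_eq_glushkovLang : ∀ {r : PRE β}, (∀ b, r.rep b ≤ 1) → r.lang = r.glushkovLang
  | .empty, _ => glushkovLang_empty.symm
  | .eps, _ => glushkovLang_eps.symm
  | .char a, _ => (glushkovLang_char a).symm
  | .paren r, h => lang_eq_glushkovLang (r := r) h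
  | .cat r s, h => by
    rw [lang, lang_eq_glushkovLang (rep_le_one_left h),
      lang_eq_glushkovLang (rep_le_one_right h),
      glushkovLang_cat (disjoint_posFin_of_rep_add_le_one h)]
  | .alt r s, h => by
    rw [lang, lang_eq_glushkovLang (rep_le_one_left h),
      lang_eq_glushkovLang (rep_le_one_right h),
      glushkovLang_alt (disjoint_posFin_of_rep_add_le_one h)]
  | .opt r, h => by rw [lang, lang_eq_glushkovLang (r := r) h, glushkovLang_opt]
  | .pos r, h => by rw [lang, lang_eq_glushkovLang (r := r) h, glushkovLang_pos]

end PRE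

/-- For an expression in which every symbol occurs at most once: a non-empty word
x₁⋯xₙ belongs to L(r) iff x₁ ∈ first(r), x_{p+1} ∈ follow(r, x_p) for all p, and
xₙ ∈ last(r); moreover ε ∈ L(r) iff r is nullable. -/
theorem stmt14 {β : Type} [DecidableEq β] (r : PRE β) (hsore : ∀ b : β, r.rep b ≤ 1) :
    (∀ (x : β) (xs : List β),
      x :: xs ∈ r.lang ↔
        x ∈ r.firstFin ∧
        List.Chain' (fun p q => q ∈ r.followFin p) (x :: xs) ∧
        (x :: xs).getLast (List.cons_ne_nil x xs) ∈ r.lastFin) ∧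
    (([] : List β) ∈ r.lang ↔ r.nullable = true) := by
  rw [PRE.lang_eq_glushkovLang hsore]
  exact ⟨fun _ _ => PRE.cons_mem_glushkovLang, PRE.nil_mem_glushkovLang⟩
end
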